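/- For all α with 1 < α < 5/4, the new bound J(α) is strictly smaller than the old bound L(α) := (15 - 2α - 8α²)/3. -/

import Mathlib

/-!
Both bounds carry the factor `(3 + 2α)(5 - 4α) = 15 - 2α - 8α²`, positive on `(1, 5/4)`, so
`J < L` reduces to `108 (3 - α) < D(α)` for the cubic denominator `D`. The difference
`-64α³ + 272α² - 192α + 45` is positive on `[1, 5/4]`, since there `16α²(17 - 4α) ≥ 192α²`
and `192α(α - 1) + 45 > 0`.
-/

theorem mul_three_sub_lt_cubic {α : ℝ} (h1 : 1 ≤ α) (h2 : α ≤ 5/4) :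
    108 * (3 - α) < -64*α^3 + 272*α^2 - 300*α + 369 := by
  have hcubic : 192 * α^2 ≤ 16 * α^2 * (17 - 4*α) := by nlinarith [sq_nonneg α]
  nlinarith [mul_nonneg (by linarith : (0:ℝ) ≤ α) (sub_nonneg.2 h1)]

theorem J_lt_L (α : ℝ) (h1 : 1 < α) (h2 : α < 5/4) :
    36*(3-α)*(3+2*α)*(5-4*α) / (-64*α^3 + 272*α^2 - 300*α + 369)
      < (15 - 2*α - 8*α^2) / 3 := by
  have hcommon : 0 < (3 + 2*α) * (5 - 4*α) := mul_pos (by linarith) (by linarith)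
  have hlt := mul_three_sub_lt_cubic h1.le h2.le
  have hD : 0 < -64*α^3 + 272*α^2 - 300*α + 369 := by linarith
  rw [div_lt_div_iff₀ hD three_pos]
  calc 36*(3-α)*(3+2*α)*(5-4*α) * 3 = (3 + 2*α) * (5 - 4*α) * (108 * (3 - α)) := by ring
    _ < (3 + 2*α) * (5 - 4*α) * (-64*α^3 + 272*α^2 - 300*α + 369) :=
        mul_lt_mul_of_pos_left hlt hcommon
    _ = (15 - 2*α - 8*α^2) * (-64*α^3 + 272*α^2 - 300*α + 369) := by ring
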